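/- Let N be a positive integer, χ a Dirichlet character modulo N, k a positive integer, and a : ℕ → ℂ a function with a(1) = 1. Then the following are equivalent: (i) for all positive integers m, n, a(m)·a(n) = ∑_{d | gcd(m,n)} χ(d) d^{k-1} a(mn/d²); (ii) for all positive integers m, n, a(mn) = ∑_{d | gcd(m,n)} μ(d) χ(d) d^{k-1} a(m/d) a(n/d), where μ is the Möbius function. -/

import Mathlib

/-!
Write `w d = χ(d) d^(k-1)`, a completely multiplicative function, and `g = gcd(m, n)`.
Applying (i) to `(m/d, n/d)` and multiplying by `w d` gives, for every `d ∣ g`,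
`w(d) a(m/d) a(n/d) = ∑_{d ∣ c ∣ g} w(c) a(mn/c²)`, while (ii) treated the same way gives
`w(d) a(mn/d²) = ∑_{d ∣ c ∣ g} μ(c/d) w(c) a(m/c) a(n/c)`. These two families are Möbius
inversions of each other on the divisor lattice of `g`, and `d = 1` recovers (i) and (ii).
-/

open Finset
open scoped ArithmeticFunction.Moebius

theorem Nat.div_div_right_eq_div_mul {g t i : ℕ} (hi : i ∣ t) (ht : t ∣ g) (ht0 : t ≠ 0) :
    g / (t / i) = g / t * i := by
  obtain ⟨q, rfl⟩ := ht
  obtain ⟨r, rfl⟩ := hi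
  have hi0 : 0 < i := Nat.pos_of_ne_zero (left_ne_zero_of_mul ht0)
  have hr0 : 0 < r := Nat.pos_of_ne_zero (right_ne_zero_of_mul ht0)
  rw [Nat.mul_div_cancel_left _ hi0, Nat.mul_div_cancel_left _ (Nat.mul_pos hi0 hr0), mul_comm i r,
    mul_assoc, Nat.mul_div_cancel_left _ hr0, mul_comm]

theorem Nat.forall_dvd_iff_forall_div {g : ℕ} (hg : g ≠ 0) {P : ℕ → Prop} :
    (∀ d, d ∣ g → P d) ↔ ∀ t > 0, t ∣ g → P (g / t) := by
  refine ⟨fun h t _ ht => h _ (Nat.div_dvd_of_dvd ht), fun h d hd => ?_⟩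
  have hd0 : 0 < d := Nat.pos_of_dvd_of_pos hd (Nat.pos_of_ne_zero hg)
  simpa [Nat.div_div_self hd hg] using
    h (g / d) (Nat.div_pos (Nat.le_of_dvd (Nat.pos_of_ne_zero hg) hd) hd0) (Nat.div_dvd_of_dvd hd)

namespace ArithmeticFunction

theorem sum_mul_divisors_eq_iff_sum_smul_moebius_eq {R : Type*} [AddCommGroup R] {g : ℕ}
    (hg : g ≠ 0) {f F : ℕ → R} :
    (∀ d, d ∣ g → ∑ e ∈ (g / d).divisors, f (d * e) = F d) ↔
      ∀ d, d ∣ g → ∑ e ∈ (g / d).divisors, μ e • F (d * e) = f d := by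
  have hL : ∀ t > 0, t ∣ g → (∑ e ∈ (g / (g / t)).divisors, f (g / t * e) = F (g / t) ↔
      ∑ i ∈ t.divisors, f (g / i) = F (g / t)) := fun t ht htg => by
    rw [Nat.div_div_self htg hg, ← Nat.sum_div_divisors t (fun i => f (g / i))]
    refine Eq.congr_left (sum_congr rfl fun e he => ?_)
    rw [Nat.div_div_right_eq_div_mul (Nat.dvd_of_mem_divisors he) htg ht.ne']
  have hR : ∀ t > 0, t ∣ g → (∑ e ∈ (g / (g / t)).divisors, μ e • F (g / t * e) = f (g / t) ↔
      ∑ x ∈ t.divisorsAntidiagonal, μ x.1 • F (g / x.2) = f (g / t)) := fun t ht htg => by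
    rw [Nat.div_div_self htg hg, Nat.sum_divisorsAntidiagonal (fun x y => μ x • F (g / y))]
    refine Eq.congr_left (sum_congr rfl fun e he => ?_)
    rw [Nat.div_div_right_eq_div_mul (Nat.dvd_of_mem_divisors he) htg ht.ne']
  -- the substitution `d ↦ g / d` turns sums over multiples into sums over divisors
  rw [Nat.forall_dvd_iff_forall_div hg, Nat.forall_dvd_iff_forall_div hg]
  exact (forall₃_congr hL).trans <| (sum_eq_iff_sum_smul_moebius_eq_on {t | t ∣ g}
    (fun _ _ h h' => h.trans h')).trans (forall₃_congr hR).symm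

end ArithmeticFunction

section HeckeRelation

variable {R : Type*} [CommRing R] (w : ℕ →* R) (a : ℕ → R)

theorem map_mul_hecke_div
    (h : ∀ m n : ℕ, 0 < m → 0 < n →
      a m * a n = ∑ d ∈ (Nat.gcd m n).divisors, w d * a (m * n / d ^ 2))
    {m n d : ℕ} (hm : 0 < m) (hn : 0 < n) (hd : d ∣ Nat.gcd m n) :
    ∑ e ∈ (Nat.gcd m n / d).divisors, w (d * e) * a (m * n / (d * e) ^ 2) =
      w d * (a (m / d) * a (n / d)) := by
  have hdm : d ∣ m := hd.trans (Nat.gcd_dvd_left m n)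
  have hdn : d ∣ n := hd.trans (Nat.gcd_dvd_right m n)
  have hd0 : 0 < d := Nat.pos_of_dvd_of_pos hdm hm
  rw [h _ _ (Nat.div_pos (Nat.le_of_dvd hm hdm) hd0) (Nat.div_pos (Nat.le_of_dvd hn hdn) hd0),
    Nat.gcd_div hdm hdn, mul_sum]
  refine sum_congr rfl fun e _ => ?_
  rw [map_mul, mul_assoc, Nat.div_mul_div_comm hdm hdn, ← sq, Nat.div_div_eq_div_mul, mul_pow]

theorem map_mul_moebius_hecke_div
    (h : ∀ m n : ℕ, 0 < m → 0 < n →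
      a (m * n) = ∑ d ∈ (Nat.gcd m n).divisors,
        ((μ d : ℤ) : R) * w d * a (m / d) * a (n / d))
    {m n d : ℕ} (hm : 0 < m) (hn : 0 < n) (hd : d ∣ Nat.gcd m n) :
    ∑ e ∈ (Nat.gcd m n / d).divisors, μ e • (w (d * e) * (a (m / (d * e)) * a (n / (d * e)))) =
      w d * a (m * n / d ^ 2) := by
  have hdm : d ∣ m := hd.trans (Nat.gcd_dvd_left m n)
  have hdn : d ∣ n := hd.trans (Nat.gcd_dvd_right m n)
  have hd0 : 0 < d := Nat.pos_of_dvd_of_pos hdm hm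
  rw [sq, ← Nat.div_mul_div_comm hdm hdn,
    h _ _ (Nat.div_pos (Nat.le_of_dvd hm hdm) hd0) (Nat.div_pos (Nat.le_of_dvd hn hdn) hd0),
    Nat.gcd_div hdm hdn, mul_sum]
  refine sum_congr rfl fun e _ => ?_
  rw [map_mul, Nat.div_div_eq_div_mul, Nat.div_div_eq_div_mul, zsmul_eq_mul]
  ring

theorem hecke_iff_moebius :
    (∀ m n : ℕ, 0 < m → 0 < n →
      a m * a n = ∑ d ∈ (Nat.gcd m n).divisors, w d * a (m * n / d ^ 2)) ↔
    ∀ m n : ℕ, 0 < m → 0 < n →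
      a (m * n) = ∑ d ∈ (Nat.gcd m n).divisors, ((μ d : ℤ) : R) * w d * a (m / d) * a (n / d) := by
  refine ⟨fun h m n hm hn => ?_, fun h m n hm hn => ?_⟩
  · have := (ArithmeticFunction.sum_mul_divisors_eq_iff_sum_smul_moebius_eq
      (f := fun c => w c * a (m * n / c ^ 2)) (F := fun c => w c * (a (m / c) * a (n / c)))
      (Nat.gcd_pos_of_pos_left n hm).ne').1
      (fun d hd => map_mul_hecke_div w a h hm hn hd) 1 (one_dvd _)
    simpa [zsmul_eq_mul, mul_assoc, eq_comm] using this
  · have := (ArithmeticFunction.sum_mul_divisors_eq_iff_sum_smul_moebius_eq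
      (f := fun c => w c * a (m * n / c ^ 2)) (F := fun c => w c * (a (m / c) * a (n / c)))
      (Nat.gcd_pos_of_pos_left n hm).ne').2
      (fun d hd => map_mul_moebius_hecke_div w a h hm hn hd) 1 (one_dvd _)
    simpa [eq_comm] using this

end HeckeRelation

theorem stmt_3_general (N : ℕ) (χ : DirichletCharacter ℂ N) (k : ℕ)
    (a : ℕ → ℂ) :
    (∀ m n : ℕ, 0 < m → 0 < n →
        a m * a n = ∑ d ∈ (Nat.gcd m n).divisors,
          χ (d : ZMod N) * (d : ℂ)^(k-1) * a (m * n / d^2))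
    ↔ (∀ m n : ℕ, 0 < m → 0 < n →
        a (m*n) = ∑ d ∈ (Nat.gcd m n).divisors,
          ((ArithmeticFunction.moebius d : ℤ) : ℂ) * χ (d : ZMod N) * (d : ℂ)^(k-1) *
            a (m/d) * a (n/d)) := by
  let w : ℕ →* ℂ := χ.toMonoidHom.comp (Nat.castRingHom (ZMod N)).toMonoidHom *
    (powMonoidHom (k - 1)).comp (Nat.castRingHom ℂ).toMonoidHom
  simpa [w, mul_assoc] using hecke_iff_moebius w a

theorem stmt_3 (N : ℕ) (hN : 0 < N) (χ : DirichletCharacter ℂ N) (k : ℕ) (hk : 0 < k)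
    (a : ℕ → ℂ) (ha : a 1 = 1) :
    (∀ m n : ℕ, 0 < m → 0 < n →
        a m * a n = ∑ d ∈ (Nat.gcd m n).divisors,
          χ (d : ZMod N) * (d : ℂ)^(k-1) * a (m * n / d^2))
    ↔ (∀ m n : ℕ, 0 < m → 0 < n →
        a (m*n) = ∑ d ∈ (Nat.gcd m n).divisors,
          ((ArithmeticFunction.moebius d : ℤ) : ℂ) * χ (d : ZMod N) * (d : ℂ)^(k-1) *
            a (m/d) * a (n/d)) :=
  stmt_3_general N χ k a
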